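/- arXiv:2302.07528 — 3 statements merged into one kernel-verified Lean document; each statement's English description precedes it below -/
import Mathlib

section
/- Let A be a homogeneous constant-coefficient differential operator of order k from ℝ^d to ℝ^e on ℝ^N, let Ω ⊆ ℝ^N be a nonempty open set, and let π : ℝ^N → ℝ^e be a polynomial map. If there exists u ∈ C^∞(Ω;ℝ^d) with A u = π on Ω, then there exists a polynomial map Π : ℝ^N → ℝ^d of degree at most deg(π) + k such that A Π = π on all of ℝ^N. -/
open MeasureTheory Matrix
open scoped ENNReal

noncomputable section

/-- The finite set of multi-indices `α : Fin N → ℕ` with `|α| = k`. -/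
def MIdx (N k : ℕ) : Finset (Fin N → ℕ) := Finset.Nat.antidiagonalTuple N k

/-- Multi-indices of order `k` as a (finite) type. -/
def MIdxT (N k : ℕ) : Type := {α : Fin N → ℕ // α ∈ MIdx N k}

instance (N k : ℕ) : Fintype (MIdxT N k) := FinsetCoe.fintype _

instance (N k : ℕ) : DecidableEq (MIdxT N k) := fun a b =>
  decidable_of_iff (a.1 = b.1) Subtype.ext_iff.symm

/-- Partial derivative in the `i`-th coordinate direction. -/
def pd {N : ℕ} {E : Type*} [NormedAddCommGroup E] [NormedSpace ℝ E]
    (i : Fin N) (f : (Fin N → ℝ) → E) : (Fin N → ℝ) → E :=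
  fun x => fderiv ℝ f x (Pi.single i 1)

/-- The iterated partial derivative `∂_α` associated to a multi-index `α`. -/
def mder {N : ℕ} {E : Type*} [NormedAddCommGroup E] [NormedSpace ℝ E]
    (α : Fin N → ℕ) (f : (Fin N → ℝ) → E) : (Fin N → ℝ) → E :=
  (List.finRange N).foldr (fun i g => (pd i)^[α i] g) f

/-- The homogeneous constant-coefficient differential operator of order `k` with
coefficient matrices `A α`, `|α| = k`, applied to `u`:  `∑_{|α|=k} A_α ∂_α u`. -/
def DOp {N : ℕ} {ι κ : Type*} [Fintype κ] (k : ℕ)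
    (A : (Fin N → ℕ) → Matrix ι κ ℝ)
    (u : (Fin N → ℝ) → κ → ℝ) : (Fin N → ℝ) → ι → ℝ :=
  fun x => ∑ α ∈ MIdx N k, (A α).mulVec (mder α u x)

/-- The (real) Fourier symbol `∑_{|α|=k} ξ^α A_α`. -/
def symR {N : ℕ} {ι κ : Type*} (k : ℕ)
    (A : (Fin N → ℕ) → Matrix ι κ ℝ) (ξ : Fin N → ℝ) : Matrix ι κ ℝ :=
  ∑ α ∈ MIdx N k, (∏ i, ξ i ^ α i) • A α

/-- The complex Fourier symbol `∑_{|α|=k} ξ^α A_α`, `ξ ∈ ℂ^N`. -/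
def symC {N : ℕ} {ι κ : Type*} (k : ℕ)
    (A : (Fin N → ℕ) → Matrix ι κ ℝ) (ξ : Fin N → ℂ) : Matrix ι κ ℂ :=
  ∑ α ∈ MIdx N k, (∏ i, ξ i ^ α i) • (A α).map (Complex.ofReal)

/-- The complex constant rank condition. -/
def CCRank {N d l : ℕ} (k : ℕ) (A : (Fin N → ℕ) → Matrix (Fin l) (Fin d) ℝ) : Prop :=
  ∃ r : ℕ, ∀ ξ : Fin N → ℂ, ξ ≠ 0 →
    Module.finrank ℂ (LinearMap.ker (symC k A ξ).mulVecLin) = r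

/-- The real constant rank condition. -/
def RCRank {N d l : ℕ} (k : ℕ) (A : (Fin N → ℕ) → Matrix (Fin l) (Fin d) ℝ) : Prop :=
  ∃ r : ℕ, ∀ ξ : Fin N → ℝ, ξ ≠ 0 →
    Module.finrank ℝ (LinearMap.ker (symR k A ξ).mulVecLin) = r

/-- Smooth compactly supported test functions on `Ω`. -/
def TestFun {N : ℕ} {E : Type*} [NormedAddCommGroup E] [NormedSpace ℝ E]
    (Ω : Set (Fin N → ℝ)) (φ : (Fin N → ℝ) → E) : Prop :=
  ContDiff ℝ (⊤ : ℕ∞) φ ∧ HasCompactSupport φ ∧ tsupport φ ⊆ Ω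

/-- `π : ℝ^N → ℝ^e` is a polynomial map of (total) degree at most `D`. -/
def IsPolyMap {N e : ℕ} (D : ℕ) (π : (Fin N → ℝ) → Fin e → ℝ) : Prop :=
  ∃ P : Fin e → MvPolynomial (Fin N) ℝ, (∀ i, (P i).totalDegree ≤ D) ∧
    ∀ (x : Fin N → ℝ) (i : Fin e), π x i = MvPolynomial.eval x (P i)

/-- `u ∈ C^∞(Ω) ∩ W^{k,p}(Ω;ℝ^d)`: all partial derivatives of order `≤ k` lie in `L^p(Ω)`. -/
def MemWkp {N d : ℕ} (k : ℕ) (p : ℝ≥0∞) (Ω : Set (Fin N → ℝ))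
    (u : (Fin N → ℝ) → Fin d → ℝ) : Prop :=
  ContDiffOn ℝ (⊤ : ℕ∞) u Ω ∧
    ∀ j ≤ k, ∀ α ∈ MIdx N j, MemLp (mder α u) p (volume.restrict Ω)

/-- The order-`s` Nečas property in `L^q` for `ℝ^e`-valued functions. -/
def Necas (N e : ℕ) (s : ℕ) (q : ℝ) (Ω : Set (Fin N → ℝ)) : Prop :=
  ∃ C : ℝ, 0 < C ∧ ∀ f : (Fin N → ℝ) → Fin e → ℝ,
    MemLp f (ENNReal.ofReal q) (volume.restrict Ω) →
    ∃ π : (Fin N → ℝ) → Fin e → ℝ, IsPolyMap (s + 1) π ∧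
      eLpNorm (f - π) (ENNReal.ofReal q) (volume.restrict Ω) ≤ ENNReal.ofReal C *
        ⨆ φ : {φ : (Fin N → ℕ) → (Fin N → ℝ) → Fin e → ℝ //
            (∀ β, TestFun Ω (φ β)) ∧
            ∑ β ∈ MIdx N s, ∑ j ∈ Finset.range (s + 1), ∑ γ ∈ MIdx N j,
              eLpNorm (mder γ (φ β)) (ENNReal.ofReal (q / (q - 1)))
                (volume.restrict Ω) ≤ 1},
          ENNReal.ofReal (∑ β ∈ MIdx N s, ∫ x in Ω, (f x) ⬝ᵥ (mder β (φ.1 β) x))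

/-- `div^k v = 0` in `𝒟'(U)`. -/
def DivFreeD {N k : ℕ} (U : Set (Fin N → ℝ)) (v : (Fin N → ℝ) → MIdxT N k → ℝ) : Prop :=
  ∀ ψ : (Fin N → ℝ) → ℝ, TestFun U ψ →
    ∑ β : MIdxT N k, ∫ x in U, v x β * mder β.1 ψ x = 0

/-- `Ω` is a divergence-free-extension domain for order `k`. -/
def DFEDomain (N k : ℕ) (Ω : Set (Fin N → ℝ)) : Prop :=
  ∃ (V : Submodule ℝ (Lp (MIdxT N k → ℝ) 1 (volume.restrict Ω)))
    (P : Lp (MIdxT N k → ℝ) 1 (volume.restrict Ω) →L[ℝ]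
          Lp (MIdxT N k → ℝ) 1 (volume.restrict Ω))
    (𝓔 : Lp (MIdxT N k → ℝ) 1 (volume.restrict Ω) →L[ℝ]
          Lp (MIdxT N k → ℝ) 1 (volume : Measure (Fin N → ℝ))),
    FiniteDimensional ℝ V ∧
    (∀ f, f ∈ V → MemLp (f : (Fin N → ℝ) → MIdxT N k → ℝ) ⊤ (volume.restrict Ω)) ∧
    (∀ v, P v ∈ V) ∧
    (∀ v, (𝓔 v : (Fin N → ℝ) → MIdxT N k → ℝ) =ᵐ[volume.restrict Ω]
        fun x => (v : (Fin N → ℝ) → MIdxT N k → ℝ) x + (P v : (Fin N → ℝ) → MIdxT N k → ℝ) x) ∧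
    (∀ v : Lp (MIdxT N k → ℝ) 1 (volume.restrict Ω),
      DivFreeD Ω (v : (Fin N → ℝ) → MIdxT N k → ℝ) →
      DivFreeD Set.univ (𝓔 v : (Fin N → ℝ) → MIdxT N k → ℝ))


namespace Aux

abbrev sm : WithTop ℕ∞ := ((⊤ : ℕ∞) : WithTop ℕ∞)

variable {N : ℕ} {E F G : Type*} [NormedAddCommGroup E] [NormedSpace ℝ E]
  [NormedAddCommGroup F] [NormedSpace ℝ F]

lemma one_le_sm : (1 : WithTop ℕ∞) ≤ sm := by
  rw [show (1 : WithTop ℕ∞) = ((1:ℕ∞):WithTop ℕ∞) from rfl]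
  exact WithTop.coe_le_coe.mpr le_top

lemma sm_add_one : (sm + 1 : WithTop ℕ∞) ≤ sm := by
  rw [show (sm + 1 : WithTop ℕ∞) = (((⊤:ℕ∞) + 1 : ℕ∞) : WithTop ℕ∞) from rfl]
  simp

lemma diffAt_of {U : Set (Fin N → ℝ)} (hU : IsOpen U) {f : (Fin N → ℝ) → E}
    (hf : ContDiffOn ℝ sm f U) {x : Fin N → ℝ} (hx : x ∈ U) : DifferentiableAt ℝ f x :=
  (hf.contDiffAt (hU.mem_nhds hx)).differentiableAt (lt_of_lt_of_le zero_lt_one one_le_sm).ne'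

lemma pd_congr {U : Set (Fin N → ℝ)} (hU : IsOpen U) {f g : (Fin N → ℝ) → E}
    (h : Set.EqOn f g U) (i : Fin N) : Set.EqOn (pd i f) (pd i g) U := by
  intro x hx
  have h2 : f =ᶠ[nhds x] g := h.eventuallyEq_of_mem (hU.mem_nhds hx)
  simp only [pd, h2.fderiv_eq]

lemma pd_contDiffOn {U : Set (Fin N → ℝ)} (hU : IsOpen U) {f : (Fin N → ℝ) → E}
    (hf : ContDiffOn ℝ sm f U) (i : Fin N) : ContDiffOn ℝ sm (pd i f) U := by
  have h1 : ContDiffOn ℝ sm (fderiv ℝ f) U := hf.fderiv_of_isOpen hU sm_add_one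
  have := (ContinuousLinearMap.apply ℝ E ((Pi.single i 1 : Fin N → ℝ))).contDiff.comp_contDiffOn h1
  exact this.congr fun x _ => rfl

lemma pd_clm {U : Set (Fin N → ℝ)} (hU : IsOpen U) {f : (Fin N → ℝ) → E}
    (hf : ContDiffOn ℝ sm f U) (L : E →L[ℝ] F) (i : Fin N) :
    Set.EqOn (pd i (fun y => L (f y))) (fun y => L (pd i f y)) U := by
  intro x hx
  have hd := diffAt_of hU hf hx
  have h2 : fderiv ℝ (fun y => L (f y)) x = L.comp (fderiv ℝ f x) :=
    (L.hasFDerivAt.comp x hd.hasFDerivAt).fderiv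
  simp [pd, h2]

lemma pd_comm {U : Set (Fin N → ℝ)} (hU : IsOpen U) {f : (Fin N → ℝ) → E}
    (hf : ContDiffOn ℝ sm f U) (i j : Fin N) :
    Set.EqOn (pd i (pd j f)) (pd j (pd i f)) U := by
  have hf' : ContDiffOn ℝ sm (fderiv ℝ f) U := hf.fderiv_of_isOpen hU sm_add_one
  have key : ∀ m l : Fin N, ∀ y ∈ U, pd m (pd l f) y
      = (fderiv ℝ (fderiv ℝ f) y (Pi.single m 1)) (Pi.single l 1) := by
    intro m l y hy
    have h1 : pd l f = fun z => (ContinuousLinearMap.apply ℝ E ((Pi.single l 1 : Fin N → ℝ)))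
        (fderiv ℝ f z) := rfl
    rw [h1, pd_clm hU hf' (ContinuousLinearMap.apply ℝ E ((Pi.single l 1 : Fin N → ℝ))) m hy]
    rfl
  intro x hx
  rw [key i j x hx, key j i x hx]
  have hev : ∀ᶠ y in nhds x, HasFDerivAt f (fderiv ℝ f y) y := by
    filter_upwards [hU.mem_nhds hx] with y hy using (diffAt_of hU hf hy).hasFDerivAt
  exact second_derivative_symmetric_of_eventually hev (diffAt_of hU hf' hx).hasFDerivAt _ _

def pdw {N : ℕ} {E : Type*} [NormedAddCommGroup E] [NormedSpace ℝ E]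
    (w : List (Fin N)) (f : (Fin N → ℝ) → E) : (Fin N → ℝ) → E :=
  w.foldr pd f

lemma pdw_nil (f : (Fin N → ℝ) → E) : pdw [] f = f := rfl

lemma pdw_cons (i : Fin N) (w : List (Fin N)) (f : (Fin N → ℝ) → E) :
    pdw (i :: w) f = pd i (pdw w f) := rfl

lemma pdw_append (a b : List (Fin N)) (f : (Fin N → ℝ) → E) :
    pdw (a ++ b) f = pdw a (pdw b f) := List.foldr_append ..

lemma pdw_replicate (m : ℕ) (i : Fin N) (f : (Fin N → ℝ) → E) :
    pdw (List.replicate m i) f = (pd i)^[m] f := by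
  induction m with
  | zero => rfl
  | succ m ih =>
      rw [List.replicate_succ, pdw_cons, ih, Function.iterate_succ_apply']

lemma pdw_congr {U : Set (Fin N → ℝ)} (hU : IsOpen U) {f g : (Fin N → ℝ) → E}
    (h : Set.EqOn f g U) (w : List (Fin N)) : Set.EqOn (pdw w f) (pdw w g) U := by
  induction w with
  | nil => exact h
  | cons i w ih => exact pd_congr hU ih i

lemma pdw_contDiffOn {U : Set (Fin N → ℝ)} (hU : IsOpen U) {f : (Fin N → ℝ) → E}
    (hf : ContDiffOn ℝ sm f U) (w : List (Fin N)) : ContDiffOn ℝ sm (pdw w f) U := by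
  induction w with
  | nil => exact hf
  | cons i w ih => exact pd_contDiffOn hU ih i

lemma pdw_clm {U : Set (Fin N → ℝ)} (hU : IsOpen U) {f : (Fin N → ℝ) → E}
    (hf : ContDiffOn ℝ sm f U) (L : E →L[ℝ] F) (w : List (Fin N)) :
    Set.EqOn (pdw w (fun y => L (f y))) (fun y => L (pdw w f y)) U := by
  induction w with
  | nil => exact fun x _ => rfl
  | cons i w ih =>
      have h1 : Set.EqOn (pd i (pdw w (fun y => L (f y)))) (pd i (fun y => L (pdw w f y))) U :=
        pd_congr hU ih i
      exact h1.trans (pd_clm hU (pdw_contDiffOn hU hf w) L i)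

lemma pdw_perm {U : Set (Fin N → ℝ)} (hU : IsOpen U) {f : (Fin N → ℝ) → E}
    (hf : ContDiffOn ℝ sm f U) {w w' : List (Fin N)} (hp : w.Perm w') :
    Set.EqOn (pdw w f) (pdw w' f) U := by
  induction hp with
  | nil => exact fun x _ => rfl
  | cons i _ ih => exact pd_congr hU ih i
  | swap i j l => exact pd_comm hU (pdw_contDiffOn hU hf l) j i
  | trans _ _ ih1 ih2 => exact ih1.trans ih2

/-- The canonical word of a multi-index along a list. -/
def wordL {N : ℕ} (l : List (Fin N)) (α : Fin N → ℕ) : List (Fin N) :=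
  l.flatMap fun i => List.replicate (α i) i

lemma wordL_cons (i : Fin N) (l : List (Fin N)) (α : Fin N → ℕ) :
    wordL (i :: l) α = List.replicate (α i) i ++ wordL l α := by
  simp [wordL]

lemma mderL_eq_pdw (α : Fin N → ℕ) (f : (Fin N → ℝ) → E) (l : List (Fin N)) :
    l.foldr (fun i g => (pd i)^[α i] g) f = pdw (wordL l α) f := by
  induction l with
  | nil => rfl
  | cons i l ih =>
      show (pd i)^[α i] (l.foldr (fun i g => (pd i)^[α i] g) f) = _
      rw [ih, wordL_cons, pdw_append, pdw_replicate]

lemma mder_eq_pdw (α : Fin N → ℕ) (f : (Fin N → ℝ) → E) :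
    mder α f = pdw (wordL (List.finRange N) α) f :=
  mderL_eq_pdw α f _

lemma count_wordL (l : List (Fin N)) (α : Fin N → ℕ) (j : Fin N) :
    (wordL l α).count j = l.count j * α j := by
  induction l with
  | nil => simp [wordL]
  | cons i l ih =>
      rw [wordL, List.flatMap_cons, List.count_append, List.count_replicate, List.count_cons]
      rw [wordL] at ih
      rw [ih]
      by_cases h : i = j
      · subst h; simp [Nat.succ_mul, Nat.add_comm]
      · simp [beq_iff_eq, h]

lemma count_word (α : Fin N → ℕ) (j : Fin N) :
    (wordL (List.finRange N) α).count j = α j := by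
  rw [count_wordL, List.count_eq_one_of_mem (List.nodup_finRange N) (List.mem_finRange j),
    one_mul]

lemma word_perm (δ α : Fin N → ℕ) :
    (wordL (List.finRange N) (fun i => δ i + α i)).Perm
      (wordL (List.finRange N) δ ++ wordL (List.finRange N) α) := by
  rw [List.perm_iff_count]
  intro j
  rw [List.count_append, count_word, count_word, count_word]

lemma mder_congr {U : Set (Fin N → ℝ)} (hU : IsOpen U) {f g : (Fin N → ℝ) → E}
    (h : Set.EqOn f g U) (α : Fin N → ℕ) : Set.EqOn (mder α f) (mder α g) U := by
  rw [mder_eq_pdw, mder_eq_pdw]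
  exact pdw_congr hU h _

lemma mder_contDiffOn {U : Set (Fin N → ℝ)} (hU : IsOpen U) {f : (Fin N → ℝ) → E}
    (hf : ContDiffOn ℝ sm f U) (α : Fin N → ℕ) : ContDiffOn ℝ sm (mder α f) U := by
  rw [mder_eq_pdw]
  exact pdw_contDiffOn hU hf _

lemma mder_clm {U : Set (Fin N → ℝ)} (hU : IsOpen U) {f : (Fin N → ℝ) → E}
    (hf : ContDiffOn ℝ sm f U) (L : E →L[ℝ] F) (α : Fin N → ℕ) :
    Set.EqOn (mder α (fun y => L (f y))) (fun y => L (mder α f y)) U := by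
  rw [mder_eq_pdw]
  intro x hx
  rw [pdw_clm hU hf L _ hx, mder_eq_pdw]

lemma mder_clm_univ {f : (Fin N → ℝ) → E} (hf : ContDiff ℝ sm f) (L : E →L[ℝ] F)
    (α : Fin N → ℕ) (x : Fin N → ℝ) :
    mder α (fun y => L (f y)) x = L (mder α f x) :=
  mder_clm isOpen_univ (contDiffOn_univ.mpr hf) L α (Set.mem_univ x)

lemma mder_mder {U : Set (Fin N → ℝ)} (hU : IsOpen U) {f : (Fin N → ℝ) → E}
    (hf : ContDiffOn ℝ sm f U) (δ α : Fin N → ℕ) :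
    Set.EqOn (mder δ (mder α f)) (mder (fun i => δ i + α i) f) U := by
  rw [mder_eq_pdw α f, mder_eq_pdw δ, mder_eq_pdw, ← pdw_append]
  exact (pdw_perm hU hf (word_perm δ α)).symm

lemma mder_pair_fst {U : Set (Fin N → ℝ)} (hU : IsOpen U) {f : (Fin N → ℝ) → E × F}
    (hf : ContDiffOn ℝ sm f U) (α : Fin N → ℕ) :
    Set.EqOn (mder α (fun y => (f y).1)) (fun y => (mder α f y).1) U := by
  have := mder_clm hU hf (ContinuousLinearMap.fst ℝ E F) α
  exact this

lemma mder_pair_snd {U : Set (Fin N → ℝ)} (hU : IsOpen U) {f : (Fin N → ℝ) → E × F}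
    (hf : ContDiffOn ℝ sm f U) (α : Fin N → ℕ) :
    Set.EqOn (mder α (fun y => (f y).2)) (fun y => (mder α f y).2) U := by
  have := mder_clm hU hf (ContinuousLinearMap.snd ℝ E F) α
  exact this

lemma mder_add {U : Set (Fin N → ℝ)} (hU : IsOpen U) {f g : (Fin N → ℝ) → E}
    (hf : ContDiffOn ℝ sm f U) (hg : ContDiffOn ℝ sm g U) (α : Fin N → ℕ) :
    Set.EqOn (mder α (fun y => f y + g y)) (fun y => mder α f y + mder α g y) U := by
  intro x hx
  have hp : ContDiffOn ℝ sm (fun y => (f y, g y)) U := hf.prodMk hg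
  have h1 := mder_clm hU hp (ContinuousLinearMap.fst ℝ E E + ContinuousLinearMap.snd ℝ E E) α hx
  simp only [ContinuousLinearMap.add_apply, ContinuousLinearMap.coe_fst',
    ContinuousLinearMap.coe_snd'] at h1
  rw [h1]
  have h2 : mder α f x = (mder α (fun y => (f y, g y)) x).1 := mder_pair_fst hU hp α hx
  have h3 : mder α g x = (mder α (fun y => (f y, g y)) x).2 := mder_pair_snd hU hp α hx
  simp only [h2, h3]

lemma mder_zero_fun (α : Fin N → ℕ) (x : Fin N → ℝ) :
    mder α (fun _ : Fin N → ℝ => (0 : E)) x = 0 := by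
  have h : mder α (fun _ : Fin N → ℝ => (0 : E)) x
      = (0 : E →L[ℝ] E) (mder α (fun _ : Fin N → ℝ => (0 : E)) x) :=
    mder_clm_univ contDiff_const (0 : E →L[ℝ] E) α x
  simpa using h

lemma mder_finsetSum {U : Set (Fin N → ℝ)} (hU : IsOpen U) {ι : Type*} (s : Finset ι)
    {f : ι → (Fin N → ℝ) → E} (hf : ∀ a ∈ s, ContDiffOn ℝ sm (f a) U) (α : Fin N → ℕ) :
    Set.EqOn (mder α (fun y => ∑ a ∈ s, f a y)) (fun y => ∑ a ∈ s, mder α (f a) y) U := by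
  classical
  induction s using Finset.induction_on with
  | empty =>
      intro x hx
      simp only [Finset.sum_empty]
      exact mder_zero_fun α x
  | @insert a s ha ih =>
      intro x hx
      have hfa : ContDiffOn ℝ sm (f a) U := hf a (Finset.mem_insert_self a s)
      have hfs : ∀ b ∈ s, ContDiffOn ℝ sm (f b) U :=
        fun b hb => hf b (Finset.mem_insert_of_mem hb)
      have hsum : ContDiffOn ℝ sm (fun y => ∑ b ∈ s, f b y) U := ContDiffOn.sum hfs
      have e1 : (fun y => ∑ b ∈ Insert.insert a s, f b y)
          = fun y => f a y + ∑ b ∈ s, f b y := by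
        funext y; rw [Finset.sum_insert ha]
      rw [e1]
      rw [mder_add hU hfa hsum α hx]
      simp only [Finset.sum_insert ha]
      rw [ih hfs hx]


lemma fderiv_shift (f : (Fin N → ℝ) → E) (c x : Fin N → ℝ) :
    fderiv ℝ (fun y => f (y + c)) x = fderiv ℝ f (x + c) := by
  by_cases h : DifferentiableAt ℝ f (x + c)
  · have h1 : HasFDerivAt (fun y : Fin N → ℝ => y + c) (ContinuousLinearMap.id ℝ (Fin N → ℝ)) x :=
      (hasFDerivAt_id x).add_const c
    have h2 : fderiv ℝ (fun y => f (y + c)) x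
        = (fderiv ℝ f (x + c)).comp (ContinuousLinearMap.id ℝ (Fin N → ℝ)) :=
      (h.hasFDerivAt.comp x h1).fderiv
    rw [h2, ContinuousLinearMap.comp_id]
  · have h' : ¬ DifferentiableAt ℝ (fun y => f (y + c)) x := by
      intro hg
      have h3 : DifferentiableAt ℝ (fun z : Fin N → ℝ => z - c) (x + c) :=
        (differentiable_id.sub_const c) _
      have hg' : DifferentiableAt ℝ (fun y => f (y + c)) ((x + c) - c) := by
        rwa [add_sub_cancel_right]
      have h4 : DifferentiableAt ℝ ((fun y => f (y + c)) ∘ fun z : Fin N → ℝ => z - c)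
          (x + c) := hg'.comp (x + c) h3
      apply h
      have h5 : ((fun y => f (y + c)) ∘ fun z : Fin N → ℝ => z - c) = f := by
        funext z
        simp
      rwa [h5] at h4
    rw [fderiv_zero_of_not_differentiableAt h, fderiv_zero_of_not_differentiableAt h']

lemma pd_shift (i : Fin N) (f : (Fin N → ℝ) → E) (c : Fin N → ℝ) :
    pd i (fun y => f (y + c)) = fun y => pd i f (y + c) := by
  funext x
  simp only [pd, fderiv_shift f c x]

lemma pd_iterate_shift (i : Fin N) (m : ℕ) (f : (Fin N → ℝ) → E) (c : Fin N → ℝ) :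
    (pd i)^[m] (fun y => f (y + c)) = fun y => (pd i)^[m] f (y + c) := by
  induction m with
  | zero => rfl
  | succ m ih => rw [Function.iterate_succ_apply', Function.iterate_succ_apply', ih, pd_shift]

lemma mder_shift (α : Fin N → ℕ) (f : (Fin N → ℝ) → E) (c : Fin N → ℝ) :
    mder α (fun y => f (y + c)) = fun y => mder α f (y + c) := by
  show (List.finRange N).foldr (fun i g => (pd i)^[α i] g) (fun y => f (y + c)) = _
  have : ∀ l : List (Fin N), l.foldr (fun i g => (pd i)^[α i] g) (fun y => f (y + c))
      = fun y => l.foldr (fun i g => (pd i)^[α i] g) f (y + c) := by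
    intro l
    induction l with
    | nil => rfl
    | cons i l ih =>
        show (pd i)^[α i] (l.foldr _ _) = _
        rw [ih, pd_iterate_shift]
        rfl
  exact this _

lemma DOp_shift {d' e' : ℕ} (k : ℕ) (A : (Fin N → ℕ) → Matrix (Fin e') (Fin d') ℝ)
    (u : (Fin N → ℝ) → Fin d' → ℝ) (c : Fin N → ℝ) (y : Fin N → ℝ) :
    DOp k A (fun z => u (z + c)) y = DOp k A u (y + c) := by
  unfold DOp
  refine Finset.sum_congr rfl fun α _ => ?_
  rw [mder_shift]


open MvPolynomial in
/-- Evaluation of a multivariate polynomial as a function. -/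
def evalP {N : ℕ} (p : MvPolynomial (Fin N) ℝ) : (Fin N → ℝ) → ℝ := fun x => eval x p

open MvPolynomial

lemma contDiff_evalP (p : MvPolynomial (Fin N) ℝ) : ContDiff ℝ sm (evalP p) := by
  induction p using MvPolynomial.induction_on with
  | C a =>
      have : evalP (C a : MvPolynomial (Fin N) ℝ) = fun _ => a := by
        funext x; simp [evalP]
      rw [this]; exact contDiff_const
  | add p q hp hq =>
      have : evalP (p + q) = fun x => evalP p x + evalP q x := by
        funext x; simp [evalP]
      rw [this]; exact hp.add hq
  | mul_X p j hp =>
      have : evalP (p * X j) = fun x => evalP p x * x j := by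
        funext x; simp [evalP]
      rw [this]
      exact hp.mul ((ContinuousLinearMap.proj j : (Fin N → ℝ) →L[ℝ] ℝ).contDiff)

lemma pd_evalP (i : Fin N) (p : MvPolynomial (Fin N) ℝ) :
    pd i (evalP p) = evalP (pderiv i p) := by
  induction p using MvPolynomial.induction_on with
  | C a =>
      have h1 : evalP (C a : MvPolynomial (Fin N) ℝ) = fun _ => a := by
        funext x; simp [evalP]
      funext x
      rw [h1]
      simp [pd, evalP]
  | add p q hp hq =>
      have h1 : evalP (p + q) = fun x => evalP p x + evalP q x := by
        funext x; simp [evalP]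
      funext x
      rw [h1]
      have hdp := (contDiff_evalP p).differentiable (lt_of_lt_of_le zero_lt_one one_le_sm).ne' x
      have hdq := (contDiff_evalP q).differentiable (lt_of_lt_of_le zero_lt_one one_le_sm).ne' x
      have : pd i (fun y => evalP p y + evalP q y) x = pd i (evalP p) x + pd i (evalP q) x := by
        simp only [pd]
        rw [fderiv_fun_add hdp hdq]
        rfl
      rw [this, hp, hq]
      simp [evalP]
  | mul_X p j hp =>
      have h1 : evalP (p * X j) = fun x => evalP p x * x j := by
        funext x; simp [evalP]
      funext x
      rw [h1]
      have hdp := (contDiff_evalP p).differentiable (lt_of_lt_of_le zero_lt_one one_le_sm).ne' x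
      have hdj : DifferentiableAt ℝ (fun y : Fin N → ℝ => y j) x :=
        (ContinuousLinearMap.proj j : (Fin N → ℝ) →L[ℝ] ℝ).differentiableAt
      have h2 : pd i (fun y => evalP p y * y j) x
          = evalP p x * pd i (fun y : Fin N → ℝ => y j) x + x j * pd i (evalP p) x := by
        simp only [pd]
        rw [fderiv_fun_mul hdp hdj]
        simp
      have h3 : pd i (fun y : Fin N → ℝ => y j) x = if j = i then 1 else 0 := by
        have : fderiv ℝ (fun y : Fin N → ℝ => y j) x
            = (ContinuousLinearMap.proj j : (Fin N → ℝ) →L[ℝ] ℝ) :=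
          (ContinuousLinearMap.proj j : (Fin N → ℝ) →L[ℝ] ℝ).fderiv
        simp only [pd, this]
        simp [ContinuousLinearMap.proj_apply, Pi.single_apply]
      rw [h2, h3, hp]
      by_cases h : j = i
      · subst h
        simp [pderiv_mul, pderiv_X_self, evalP]
      · rw [if_neg h]
        simp [pderiv_mul, pderiv_X_of_ne h, evalP]

/-- Formal iterated partial derivative of a polynomial. -/
def mderP {N : ℕ} (α : Fin N → ℕ) (p : MvPolynomial (Fin N) ℝ) : MvPolynomial (Fin N) ℝ :=
  (List.finRange N).foldr (fun i q => (pderiv i)^[α i] q) p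

lemma mder_evalP (α : Fin N → ℕ) (p : MvPolynomial (Fin N) ℝ) :
    mder α (evalP p) = evalP (mderP α p) := by
  have hit : ∀ (i : Fin N) (m : ℕ) (q : MvPolynomial (Fin N) ℝ),
      (pd i)^[m] (evalP q) = evalP ((pderiv i)^[m] q) := by
    intro i m
    induction m with
    | zero => intro q; rfl
    | succ m ih =>
        intro q
        rw [Function.iterate_succ_apply', Function.iterate_succ_apply', ih, pd_evalP]
  show (List.finRange N).foldr (fun i g => (pd i)^[α i] g) (evalP p) = _
  have : ∀ l : List (Fin N), l.foldr (fun i g => (pd i)^[α i] g) (evalP p)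
      = evalP (l.foldr (fun i q => (pderiv i)^[α i] q) p) := by
    intro l
    induction l with
    | nil => rfl
    | cons i l ih =>
        show (pd i)^[α i] (l.foldr _ _) = _
        rw [ih, hit]
        rfl
  exact this _

/-- Function `Fin N → ℕ` to finsupp. -/
def toF {N : ℕ} (α : Fin N → ℕ) : Fin N →₀ ℕ := Finsupp.equivFunOnFinite.symm α

lemma toF_apply (α : Fin N → ℕ) (j : Fin N) : toF α j = α j := rfl

lemma coe_toF (α : Fin N → ℕ) : ⇑(toF α) = α := rfl

lemma toF_coe (s : Fin N →₀ ℕ) : toF ⇑s = s := Finsupp.equivFunOnFinite_symm_coe s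

lemma toF_eq_iff (α : Fin N → ℕ) (s : Fin N →₀ ℕ) : toF α = s ↔ α = ⇑s := by
  constructor
  · intro h; rw [← h, coe_toF]
  · intro h; rw [h, toF_coe]

lemma coeff_pderiv (i : Fin N) (q : MvPolynomial (Fin N) ℝ) (s : Fin N →₀ ℕ) :
    coeff s (pderiv i q) = ((s i : ℝ) + 1) * coeff (s + Finsupp.single i 1) q := by
  induction q using MvPolynomial.induction_on' with
  | add p q hp hq => simp [map_add, coeff_add, hp, hq]; ring
  | monomial u a =>
      rw [pderiv_monomial]
      by_cases h : u = s + Finsupp.single i 1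
      · subst h
        rw [coeff_monomial, coeff_monomial, if_pos rfl, if_pos]
        · rw [Finsupp.add_apply, Finsupp.single_eq_same]
          push_cast
          ring
        · ext j
          rw [Finsupp.tsub_apply, Finsupp.add_apply]
          by_cases hj : i = j
          · subst hj; simp [Finsupp.single_apply]
          · simp [Finsupp.single_apply, hj]
      · rw [coeff_monomial, coeff_monomial, if_neg h]
        by_cases h2 : u - Finsupp.single i 1 = s
        · rw [if_pos h2]
          by_cases h3 : u i = 0
          · simp [h3]
          · exfalso
            apply h
            ext j
            rw [Finsupp.add_apply, ← h2, Finsupp.tsub_apply]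
            by_cases hj : i = j
            · subst hj
              rw [Finsupp.single_eq_same]
              try rw [Finsupp.single_eq_same]
              omega
            · simp [Finsupp.single_apply, hj]
        · rw [if_neg h2]
          ring

/-- Ascending factorial-type product. -/
def asc (s m : ℕ) : ℕ := ∏ t ∈ Finset.range m, (s + t + 1)

lemma asc_succ (s m : ℕ) : asc s (m + 1) = asc s m * (s + m + 1) := Finset.prod_range_succ _ m

lemma asc_succ' (s m : ℕ) : asc s (m + 1) = (s + 1) * asc (s + 1) m := by
  unfold asc
  rw [Finset.prod_range_succ']
  rw [mul_comm]
  congr 1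
  apply Finset.prod_congr rfl
  intro t _
  ring

lemma factorial_mul_asc (s m : ℕ) : s.factorial * asc s m = (s + m).factorial := by
  induction m with
  | zero => simp [asc]
  | succ m ih =>
      rw [asc_succ, ← mul_assoc, ih, show s + (m + 1) = (s + m) + 1 by ring,
        Nat.factorial_succ]
      ring

lemma asc_zero_left (m : ℕ) : asc 0 m = m.factorial := by
  have := factorial_mul_asc 0 m
  simpa using this

lemma coeff_pderiv_iterate (i : Fin N) (m : ℕ) (q : MvPolynomial (Fin N) ℝ) (s : Fin N →₀ ℕ) :
    coeff s ((pderiv i)^[m] q) = (asc (s i) m : ℝ) * coeff (s + Finsupp.single i m) q := by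
  induction m generalizing s with
  | zero => simp [asc]
  | succ m ih =>
      rw [Function.iterate_succ_apply', coeff_pderiv, ih]
      rw [Finsupp.add_apply, Finsupp.single_eq_same]
      have h2 : s + Finsupp.single i 1 + Finsupp.single i m = s + Finsupp.single i (m + 1) := by
        rw [add_assoc, ← Finsupp.single_add]
        congr 2
        ring
      rw [h2, asc_succ']
      push_cast
      ring

lemma coeff_mderL (α : Fin N → ℕ) (q : MvPolynomial (Fin N) ℝ) :
    ∀ l : List (Fin N), l.Nodup → ∀ s : Fin N →₀ ℕ,
      coeff s (l.foldr (fun i r => (pderiv i)^[α i] r) q)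
        = ((l.map fun i => (asc (s i) (α i) : ℝ)).prod)
          * coeff (s + (l.map fun i => Finsupp.single i (α i)).sum) q := by
  intro l
  induction l with
  | nil => intro _ s; simp
  | cons i l ih =>
      intro hnd s
      have hi : i ∉ l := (List.nodup_cons.mp hnd).1
      have hl : l.Nodup := (List.nodup_cons.mp hnd).2
      show coeff s ((pderiv i)^[α i] (l.foldr _ q)) = _
      rw [coeff_pderiv_iterate, ih hl]
      have hmap : (l.map fun j => (asc ((s + Finsupp.single i (α i)) j) (α j) : ℝ))
          = l.map fun j => (asc (s j) (α j) : ℝ) := by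
        apply List.map_congr_left
        intro j hj
        have : i ≠ j := fun h => hi (h ▸ hj)
        rw [Finsupp.add_apply, Finsupp.single_apply, if_neg this, add_zero]
      rw [hmap, List.map_cons, List.prod_cons, List.map_cons, List.sum_cons]
      rw [add_assoc]
      ring

lemma list_prod_finRange (f : Fin N → ℝ) : ((List.finRange N).map f).prod = ∏ i, f i := by
  rw [← List.ofFn_eq_map, List.prod_ofFn]

lemma sum_single_finRange (α : Fin N → ℕ) :
    ((List.finRange N).map fun i => Finsupp.single i (α i)).sum = toF α := by
  ext j
  have happ : ∀ l : List (Fin N),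
      ((l.map fun i => Finsupp.single i (α i)).sum) j
        = (l.map fun i => Finsupp.single i (α i) j).sum := by
    intro l
    induction l with
    | nil => rfl
    | cons a l ihl => simp [List.sum_cons, Finsupp.add_apply, ihl]
  rw [happ, toF_apply]
  rw [show ((List.finRange N).map fun i => Finsupp.single i (α i) j)
      = List.ofFn (fun i => Finsupp.single i (α i) j) from (List.ofFn_eq_map).symm]
  rw [List.sum_ofFn]
  have : ∀ i : Fin N, Finsupp.single i (α i) j = if i = j then α i else 0 := by
    intro i; rw [Finsupp.single_apply]
  simp only [this]
  rw [Finset.sum_ite_eq' Finset.univ j (fun i => α i)]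
  simp

lemma coeff_mderP (α : Fin N → ℕ) (q : MvPolynomial (Fin N) ℝ) (s : Fin N →₀ ℕ) :
    coeff s (mderP α q) = (∏ i, (asc (s i) (α i) : ℝ)) * coeff (s + toF α) q := by
  rw [mderP, coeff_mderL α q (List.finRange N) (List.nodup_finRange N) s,
    sum_single_finRange, list_prod_finRange]

lemma eval_zero_eq_coeff (q : MvPolynomial (Fin N) ℝ) : eval (0 : Fin N → ℝ) q = coeff 0 q := by
  simp only [eval_zero]
  rfl

/-- `δ!` as a real number. -/
def factR {N : ℕ} (δ : Fin N → ℕ) : ℝ := ∏ i, ((δ i).factorial : ℝ)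

lemma factR_ne_zero (δ : Fin N → ℕ) : factR δ ≠ 0 := by
  unfold factR
  apply Finset.prod_ne_zero_iff.mpr
  intro i _
  exact_mod_cast (Nat.factorial_pos (δ i)).ne'

lemma factR_mul_asc (s α : Fin N → ℕ) :
    factR s * (∏ i, (asc (s i) (α i) : ℝ)) = factR (fun i => s i + α i) := by
  unfold factR
  rw [← Finset.prod_mul_distrib]
  apply Finset.prod_congr rfl
  intro i _
  exact_mod_cast congrArg (fun n : ℕ => (n : ℝ)) (factorial_mul_asc (s i) (α i))

lemma eval_zero_mderP (δ : Fin N → ℕ) (q : MvPolynomial (Fin N) ℝ) :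
    eval (0 : Fin N → ℝ) (mderP δ q) = factR δ * coeff (toF δ) q := by
  rw [eval_zero_eq_coeff, coeff_mderP, zero_add]
  congr 1
  unfold factR
  apply Finset.prod_congr rfl
  intro i _
  rw [show (0 : Fin N →₀ ℕ) i = 0 from rfl, asc_zero_left]

/-- Shift (translate) a polynomial. -/
def shiftP {N : ℕ} (c : Fin N → ℝ) (p : MvPolynomial (Fin N) ℝ) : MvPolynomial (Fin N) ℝ :=
  bind₁ (fun i => X i + C (c i)) p

lemma aeval_eq_eval (y : Fin N → ℝ) (q : MvPolynomial (Fin N) ℝ) :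
    aeval (R := ℝ) y q = eval y q := by
  rw [aeval_def, Algebra.algebraMap_self]
  rfl

lemma eval_shiftP (c : Fin N → ℝ) (p : MvPolynomial (Fin N) ℝ) (x : Fin N → ℝ) :
    eval x (shiftP c p) = eval (x + c) p := by
  unfold shiftP
  rw [← aeval_eq_eval, aeval_bind₁]
  have h2 : (fun i => aeval (R := ℝ) x (X i + C (c i))) = x + c := by
    funext i
    rw [aeval_eq_eval]
    simp
  rw [h2, aeval_eq_eval]

lemma totalDegree_shiftP (c : Fin N → ℝ) (p : MvPolynomial (Fin N) ℝ) :
    (shiftP c p).totalDegree ≤ p.totalDegree := by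
  unfold shiftP
  conv_lhs => rw [p.as_sum]
  rw [map_sum]
  refine le_trans (totalDegree_finset_sum _ _) ?_
  apply Finset.sup_le
  intro v hv
  rw [bind₁_monomial]
  refine le_trans (totalDegree_mul _ _) ?_
  rw [totalDegree_C, zero_add]
  refine le_trans (totalDegree_finset_prod _ _) ?_
  refine le_trans ?_ (le_totalDegree hv)
  apply Finset.sum_le_sum
  intro i _
  refine le_trans (totalDegree_pow _ _) ?_
  have h1 : (X i + C (c i) : MvPolynomial (Fin N) ℝ).totalDegree ≤ 1 := by
    refine le_trans (totalDegree_add _ _) ?_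
    simp [totalDegree_X, totalDegree_C]
  calc v i * (X i + C (c i) : MvPolynomial (Fin N) ℝ).totalDegree ≤ v i * 1 :=
        Nat.mul_le_mul_left _ h1
    _ = v i := by ring

lemma finsupp_sum_eq (s : Fin N →₀ ℕ) : (s.sum fun _ e' => e') = ∑ t, s t := by
  rw [Finsupp.sum]
  apply Finset.sum_subset (Finset.subset_univ _)
  intro x _ hx
  exact Finsupp.notMem_support_iff.mp hx

lemma coe_add_toF (s : Fin N →₀ ℕ) (α : Fin N → ℕ) :
    ⇑(s + toF α) = fun t => s t + α t := by
  funext t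
  rw [Finsupp.add_apply, toF_apply]

lemma core {N d e k D : ℕ} (U : Set (Fin N → ℝ)) (hU : IsOpen U) (h0 : (0 : Fin N → ℝ) ∈ U)
    (A : (Fin N → ℕ) → Matrix (Fin e) (Fin d) ℝ)
    (u : (Fin N → ℝ) → Fin d → ℝ) (hu : ContDiffOn ℝ sm u U)
    (Pp : Fin e → MvPolynomial (Fin N) ℝ) (hdeg : ∀ i, (Pp i).totalDegree ≤ D)
    (hAu : ∀ y ∈ U, DOp k A u y = fun i => eval y (Pp i)) :
    ∃ Q : Fin d → MvPolynomial (Fin N) ℝ, (∀ j, (Q j).totalDegree ≤ D + k) ∧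
      ∀ x i, DOp k A (fun y j => eval y (Q j)) x i = eval x (Pp i) := by
  classical
  -- the Taylor coefficients of u at 0
  set c : (Fin N → ℕ) → Fin d → ℝ := fun γ => mder γ u 0 with hc
  -- the candidate polynomial
  set Q : Fin d → MvPolynomial (Fin N) ℝ := fun j =>
    ∑ m ∈ Finset.range (D + k + 1), ∑ γ ∈ MIdx N m, monomial (toF γ) (c γ j / factR γ) with hQ
  -- coefficients of Q
  have coeff_Q : ∀ (s : Fin N →₀ ℕ) (j : Fin d),
      coeff s (Q j) = if (∑ t, s t) ≤ D + k then c ⇑s j / factR ⇑s else 0 := by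
    intro s j
    rw [hQ]
    simp only [coeff_sum, coeff_monomial]
    have h1 : ∀ m : ℕ, ∀ γ ∈ MIdx N m, (toF γ = s) ↔ (γ = ⇑s) := fun m γ _ => toF_eq_iff γ s
    have h2 : ∀ m ∈ Finset.range (D + k + 1),
        (∑ γ ∈ MIdx N m, if toF γ = s then c γ j / factR γ else 0)
          = if m = ∑ t, s t then c ⇑s j / factR ⇑s else 0 := by
      intro m _
      have : (∑ γ ∈ MIdx N m, if toF γ = s then c γ j / factR γ else 0)
          = ∑ γ ∈ MIdx N m, if γ = ⇑s then c γ j / factR γ else 0 := by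
        apply Finset.sum_congr rfl
        intro γ hγ
        rw [if_congr (h1 m γ hγ) rfl rfl]
      rw [this, Finset.sum_ite_eq' (MIdx N m) ⇑s (fun γ => c γ j / factR γ)]
      congr 1
      rw [eq_iff_iff]
      rw [MIdx, Finset.Nat.mem_antidiagonalTuple]
      exact ⟨fun h => (h.symm : m = _), fun h => h.symm⟩
    rw [Finset.sum_congr rfl h2, Finset.sum_ite_eq' (Finset.range (D + k + 1)) (∑ t, s t)
      (fun _ => c ⇑s j / factR ⇑s)]
    congr 1
    rw [eq_iff_iff, Finset.mem_range_succ_iff]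
  -- degree bound for Q
  have hQdeg : ∀ j, (Q j).totalDegree ≤ D + k := by
    intro j
    rw [hQ]
    refine le_trans (totalDegree_finset_sum _ _) ?_
    apply Finset.sup_le
    intro m hm
    refine le_trans (totalDegree_finset_sum _ _) ?_
    apply Finset.sup_le
    intro γ hγ
    by_cases hz : c γ j / factR γ = 0
    · rw [hz]
      simp
    · rw [totalDegree_monomial _ hz, finsupp_sum_eq]
      have : ∑ t, (toF γ) t = m := by
        have := (Finset.Nat.mem_antidiagonalTuple).mp hγ
        simpa [toF_apply] using this
      rw [this]
      exact Finset.mem_range_succ_iff.mp hm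
  -- smoothness of the pi polynomial function
  have hPf : ContDiff ℝ sm (fun y i => eval y (Pp i)) :=
    contDiff_pi.mpr fun i => contDiff_evalP (Pp i)
  -- the key derivative identity
  have key : ∀ δ : Fin N → ℕ, ∀ i : Fin e,
      factR δ * coeff (toF δ) (Pp i)
        = ∑ α ∈ MIdx N k, ∑ j, A α i j * c (fun t => δ t + α t) j := by
    intro δ i
    -- right side of the PDE
    have hR : mder δ (fun y i => eval y (Pp i)) 0 i = factR δ * coeff (toF δ) (Pp i) := by
      have h1 : mder δ (evalP (Pp i)) 0
          = (mder δ (fun y i' => eval y (Pp i')) 0) i :=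
        mder_clm_univ hPf (ContinuousLinearMap.proj i) δ 0
      rw [← h1, mder_evalP]
      exact eval_zero_mderP δ (Pp i)
    -- left side
    set f : (Fin N → ℕ) → (Fin N → ℝ) → Fin e → ℝ :=
      fun α y => (A α).mulVec (mder α u y) with hf
    have hDOp : DOp k A u = fun y => ∑ α ∈ MIdx N k, f α y := rfl
    have hLα : ∀ α, ∀ v : Fin d → ℝ,
        (LinearMap.toContinuousLinearMap ((A α).mulVecLin)) v = (A α).mulVec v := by
      intro α v
      simp [Matrix.mulVecLin_apply]
    have hfsm : ∀ α ∈ MIdx N k, ContDiffOn ℝ sm (f α) U := by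
      intro α _
      have := (LinearMap.toContinuousLinearMap ((A α).mulVecLin)).contDiff.comp_contDiffOn
        (mder_contDiffOn hU hu α)
      refine this.congr fun y _ => ?_
      rw [hf]
      exact (hLα α (mder α u y)).symm
    have hL : mder δ (DOp k A u) 0 = ∑ α ∈ MIdx N k, (A α).mulVec (c (fun t => δ t + α t)) := by
      rw [hDOp]
      rw [mder_finsetSum hU (MIdx N k) hfsm δ h0]
      apply Finset.sum_congr rfl
      intro α hα
      have h2 : Set.EqOn (mder δ (f α))
          (fun y => (LinearMap.toContinuousLinearMap ((A α).mulVecLin)) (mder δ (mder α u) y))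
          U := by
        have he : f α = fun y => (LinearMap.toContinuousLinearMap ((A α).mulVecLin))
            (mder α u y) := by
          funext y; rw [hf]; exact (hLα α _).symm
        rw [he]
        exact mder_clm hU (mder_contDiffOn hU hu α) _ δ
      rw [h2 h0]
      show (LinearMap.toContinuousLinearMap ((A α).mulVecLin)) (mder δ (mder α u) 0) = _
      rw [hLα, mder_mder hU hu δ α h0]
    -- combine
    have hEq : Set.EqOn (DOp k A u) (fun y i => eval y (Pp i)) U := fun y hy => hAu y hy
    have h3 := mder_congr hU hEq δ h0
    have h4 : mder δ (DOp k A u) 0 i = factR δ * coeff (toF δ) (Pp i) := by rw [h3, hR]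
    rw [← h4, hL]
    rw [Finset.sum_apply]
    apply Finset.sum_congr rfl
    intro α _
    simp [Matrix.mulVec, dotProduct]
  -- the polynomial identity
  have main : ∀ i, (∑ α ∈ MIdx N k, ∑ j, (A α i j) • mderP α (Q j)) = Pp i := by
    intro i
    apply MvPolynomial.ext
    intro s
    rw [coeff_sum]
    by_cases hcase : (∑ t, s t) ≤ D
    · have hstep : ∀ α ∈ MIdx N k,
          coeff s (∑ j, (A α i j) • mderP α (Q j))
            = (1 / factR ⇑s) * ∑ j, A α i j * c (fun t => s t + α t) j := by
        intro α hα
        rw [coeff_sum, Finset.mul_sum]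
        apply Finset.sum_congr rfl
        intro j _
        rw [coeff_smul, coeff_mderP, coeff_Q]
        have hαk : ∑ t, α t = k := (Finset.Nat.mem_antidiagonalTuple).mp hα
        have hco : ⇑(s + toF α) = fun t => s t + α t := coe_add_toF s α
        have hsum : (∑ t, (s + toF α) t) = (∑ t, s t) + k := by
          rw [show (fun t => (s + toF α) t) = fun t => s t + α t from hco]
          rw [Finset.sum_add_distrib, hαk]
        rw [hsum, if_pos (by omega), hco]
        have hfr : factR ⇑s * (∏ t, (asc (s t) (α t) : ℝ)) = factR (fun t => s t + α t) :=
          factR_mul_asc ⇑s α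
        have h5 := factR_ne_zero (N := N) ⇑s
        have h6 := factR_ne_zero (fun t => s t + α t)
        have h7 : (∏ t, (asc (s t) (α t) : ℝ)) ≠ 0 := by
          intro hz
          exact h6 (by rw [← hfr, hz, mul_zero])
        rw [smul_eq_mul, ← hfr]
        field_simp
      rw [Finset.sum_congr rfl hstep, ← Finset.mul_sum, ← key ⇑s i, toF_coe]
      rw [← mul_assoc, one_div, inv_mul_cancel₀ (factR_ne_zero ⇑s), one_mul]
    · have hzero : ∀ α ∈ MIdx N k, coeff s (∑ j, (A α i j) • mderP α (Q j)) = 0 := by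
        intro α hα
        rw [coeff_sum]
        apply Finset.sum_eq_zero
        intro j _
        rw [coeff_smul, coeff_mderP, coeff_Q]
        have hαk : ∑ t, α t = k := (Finset.Nat.mem_antidiagonalTuple).mp hα
        have hco : ⇑(s + toF α) = fun t => s t + α t := coe_add_toF s α
        have hsum : (∑ t, (s + toF α) t) = (∑ t, s t) + k := by
          rw [show (fun t => (s + toF α) t) = fun t => s t + α t from hco]
          rw [Finset.sum_add_distrib, hαk]
        rw [hsum, if_neg (by omega)]
        simp
      rw [Finset.sum_congr rfl hzero, Finset.sum_const, smul_zero]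
      symm
      apply coeff_eq_zero_of_totalDegree_lt
      have hss : ∑ t ∈ s.support, s t = ∑ t, s t :=
        Finset.sum_subset (Finset.subset_univ _) (fun x _ hx => Finsupp.notMem_support_iff.mp hx)
      refine lt_of_le_of_lt (hdeg i) ?_
      rw [hss]
      omega
  -- conclude
  refine ⟨Q, hQdeg, ?_⟩
  intro x i
  have hQsm : ContDiff ℝ sm (fun y (j : Fin d) => eval y (Q j)) :=
    contDiff_pi.mpr fun j => contDiff_evalP (Q j)
  have hmdercomp : ∀ (α : Fin N → ℕ) (j : Fin d),
      mder α (fun y (j' : Fin d) => eval y (Q j')) x j = eval x (mderP α (Q j)) := by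
    intro α j
    have h1 : mder α (evalP (Q j)) x
        = (mder α (fun y (j' : Fin d) => eval y (Q j')) x) j :=
      mder_clm_univ hQsm (ContinuousLinearMap.proj j) α x
    rw [← h1, mder_evalP]
    rfl
  have h7 : DOp k A (fun y j => eval y (Q j)) x i
      = ∑ α ∈ MIdx N k, ∑ j, A α i j * eval x (mderP α (Q j)) := by
    rw [DOp, Finset.sum_apply]
    apply Finset.sum_congr rfl
    intro α _
    rw [Matrix.mulVec]
    simp only [dotProduct]
    apply Finset.sum_congr rfl
    intro j _
    rw [hmdercomp α j]
  rw [h7, ← main i]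
  rw [map_sum]
  apply Finset.sum_congr rfl
  intro α _
  rw [map_sum]
  apply Finset.sum_congr rfl
  intro j _
  rw [smul_eq_C_mul, eval_mul, eval_C]

end Aux

theorem statement4 {N d e k : ℕ}
    (Ω : Set (Fin N → ℝ)) (hΩo : IsOpen Ω) (hΩne : Ω.Nonempty)
    (A : (Fin N → ℕ) → Matrix (Fin e) (Fin d) ℝ)
    (D : ℕ) (π : (Fin N → ℝ) → Fin e → ℝ) (hπ : IsPolyMap D π)
    (u : (Fin N → ℝ) → Fin d → ℝ) (hu : ContDiffOn ℝ (⊤ : ℕ∞) u Ω)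
    (hAu : ∀ x ∈ Ω, DOp k A u x = π x) :
    ∃ P : (Fin N → ℝ) → Fin d → ℝ, IsPolyMap (D + k) P ∧ ∀ x, DOp k A P x = π x := by
  classical
  obtain ⟨x₀, hx₀⟩ := hΩne
  obtain ⟨Pπ, hPdeg, hPeval⟩ := hπ
  set U : Set (Fin N → ℝ) := (fun y => y + x₀) ⁻¹' Ω with hUdef
  have hUo : IsOpen U := hΩo.preimage (continuous_id.add continuous_const)
  have h0 : (0 : Fin N → ℝ) ∈ U := by
    show (0 : Fin N → ℝ) + x₀ ∈ Ω
    simpa using hx₀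
  set u' : (Fin N → ℝ) → Fin d → ℝ := fun y => u (y + x₀) with hu'def
  have hu1 : ContDiffOn ℝ Aux.sm u Ω := hu.of_le (by simp)
  have hshift : ContDiff ℝ Aux.sm (fun y : Fin N → ℝ => y + x₀) :=
    contDiff_id.add contDiff_const
  have hu' : ContDiffOn ℝ Aux.sm u' U := by
    have hcomp := hu1.comp (hshift.contDiffOn (s := U)) (fun y hy => hy)
    exact hcomp.congr fun y _ => rfl
  set Pp : Fin e → MvPolynomial (Fin N) ℝ := fun i => Aux.shiftP x₀ (Pπ i) with hPp
  have hPpdeg : ∀ i, (Pp i).totalDegree ≤ D := fun i =>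
    le_trans (Aux.totalDegree_shiftP _ _) (hPdeg i)
  have hAu' : ∀ y ∈ U, DOp k A u' y = fun i => MvPolynomial.eval y (Pp i) := by
    intro y hy
    have h1 : DOp k A u' y = DOp k A u (y + x₀) := Aux.DOp_shift k A u x₀ y
    rw [h1, hAu (y + x₀) hy]
    funext i
    rw [hPp]
    rw [Aux.eval_shiftP]
    exact hPeval (y + x₀) i
  obtain ⟨Q, hQdeg, hQeq⟩ := Aux.core U hUo h0 A u' hu' Pp hPpdeg hAu'
  refine ⟨fun x j => MvPolynomial.eval x (Aux.shiftP (-x₀) (Q j)), ?_, ?_⟩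
  · exact ⟨fun j => Aux.shiftP (-x₀) (Q j),
      fun j => le_trans (Aux.totalDegree_shiftP _ _) (hQdeg j), fun x j => rfl⟩
  · intro x
    have hPeq : (fun x (j : Fin d) => MvPolynomial.eval x (Aux.shiftP (-x₀) (Q j)))
        = fun x => (fun y (j : Fin d) => MvPolynomial.eval y (Q j)) (x + (-x₀)) := by
      funext x j
      rw [Aux.eval_shiftP]
    rw [hPeq, Aux.DOp_shift k A (fun y (j : Fin d) => MvPolynomial.eval y (Q j)) (-x₀) x]
    funext i
    rw [hQeq (x + -x₀) i, hPp]
    rw [Aux.eval_shiftP]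
    rw [neg_add_cancel_right]
    exact (hPeval x i).symm

end
end

section
/- Let N, l, m ≥ 1 and j ≥ 1, and for each multi-index β ∈ ℕ^N with |β| = j let 𝓑_β : ℝ^l → ℝ^m be a linear map. Define 𝓑[ξ] = ∑_{|β|=j} ξ^β 𝓑_β for ξ ∈ ℝ^N and W = ⋂_{ξ ∈ ℝ^N \ {0}} ker 𝓑[ξ]. Then W = ⋂_{|β|=j} ker 𝓑_β, and there exist linear maps C_β : ℝ^m → ℝ^l (|β| = j) such that ∑_{|β|=j} C_β ∘ 𝓑_β = P_{W^⊥}, the orthogonal projection of ℝ^l onto the orthogonal complement of W. -/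
open MeasureTheory Matrix
open scoped ENNReal

noncomputable section

-- auxiliary lemmas
lemma aux_coeff {N : ℕ} (j : ℕ) (hj : 1 ≤ j) (c : (Fin N → ℕ) → ℝ)
    (h : ∀ ξ : Fin N → ℝ, ξ ≠ 0 → ∑ β ∈ MIdx N j, (∏ i, ξ i ^ β i) * c β = 0)
    (β : Fin N → ℕ) (hβ : β ∈ MIdx N j) : c β = 0 := by
  have hzero : ∀ ξ : Fin N → ℝ, ∑ β ∈ MIdx N j, (∏ i, ξ i ^ β i) * c β = 0 := by
    intro ξ
    by_cases hξ : ξ = 0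
    · subst hξ
      refine Finset.sum_eq_zero fun γ hγ => ?_
      have hγ' : ∑ i, γ i = j := (Finset.Nat.mem_antidiagonalTuple).1 hγ
      have : ∃ i, γ i ≠ 0 := by
        by_contra hc
        push_neg at hc
        simp [hc] at hγ'
        omega
      obtain ⟨i, hi⟩ := this
      have : (∏ i, (0 : ℝ) ^ γ i) = 0 :=
        Finset.prod_eq_zero (Finset.mem_univ i) (by simp [hi, zero_pow])
      simp [this]
    · exact h ξ hξ
  set p : MvPolynomial (Fin N) ℝ :=
    ∑ γ ∈ MIdx N j, MvPolynomial.monomial (Finsupp.equivFunOnFinite.symm γ) (c γ) with hp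
  have heval : ∀ x : Fin N → ℝ, MvPolynomial.eval x p = 0 := by
    intro x
    rw [hp, map_sum]
    rw [← hzero x]
    refine Finset.sum_congr rfl fun γ hγ => ?_
    rw [MvPolynomial.eval_monomial]
    rw [mul_comm]
    congr 1
    rw [Finsupp.prod_pow]
    rfl
  have hp0 : p = 0 := MvPolynomial.funext (q := 0) (by simp [heval])
  have := congrArg (MvPolynomial.coeff (Finsupp.equivFunOnFinite.symm β)) hp0
  rw [hp, MvPolynomial.coeff_zero, MvPolynomial.coeff_sum] at this
  rw [Finset.sum_eq_single β (fun γ _ hne => by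
        rw [MvPolynomial.coeff_monomial, if_neg]
        exact fun hc => hne (Finsupp.equivFunOnFinite.symm.injective hc))
      (fun hc => absurd hβ hc)] at this
  rwa [MvPolynomial.coeff_monomial, if_pos rfl] at this

lemma aux_factor {K V V' V'' : Type*} [Field K] [AddCommGroup V] [Module K V]
    [AddCommGroup V'] [Module K V'] [AddCommGroup V''] [Module K V'']
    (T : V →ₗ[K] V') (P : V →ₗ[K] V'') (h : LinearMap.ker T ≤ LinearMap.ker P) :
    ∃ L : V' →ₗ[K] V'', ∀ v, L (T v) = P v := by
  let T' : (V ⧸ LinearMap.ker T) →ₗ[K] V' := (LinearMap.ker T).liftQ T le_rfl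
  have hinj : LinearMap.ker T' = ⊥ := Submodule.ker_liftQ_eq_bot _ _ _ le_rfl
  obtain ⟨g, hg⟩ := T'.exists_leftInverse_of_injective hinj
  refine ⟨(LinearMap.ker T).liftQ P h ∘ₗ g, fun v => ?_⟩
  have h2 : g (T' (Submodule.Quotient.mk v)) = Submodule.Quotient.mk v := by
    have := congrArg (fun f => f ((LinearMap.ker T).mkQ v)) hg
    simpa using this
  show ((LinearMap.ker T).liftQ P h) (g (T v)) = P v
  have h1 : T v = T' (Submodule.Quotient.mk v) := rfl
  rw [h1, h2, Submodule.liftQ_apply]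

lemma aux_symR_mulVec {N l m : ℕ} (j : ℕ) (𝓑 : (Fin N → ℕ) → Matrix (Fin m) (Fin l) ℝ)
    (ξ : Fin N → ℝ) (w : Fin l → ℝ) :
    (symR j 𝓑 ξ).mulVec w = ∑ β ∈ MIdx N j, (∏ i, ξ i ^ β i) • ((𝓑 β).mulVec w) := by
  funext i
  simp only [symR, Matrix.mulVec, dotProduct, Matrix.sum_apply, Matrix.smul_apply,
    Finset.sum_apply, Pi.smul_apply, smul_eq_mul, Finset.sum_mul, mul_assoc]
  rw [Finset.sum_comm]
  exact Finset.sum_congr rfl fun γ _ => (Finset.mul_sum _ _ _).symm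


theorem statement8 {N l m : ℕ} (hN : 1 ≤ N) (hl : 1 ≤ l) (hm : 1 ≤ m) (j : ℕ) (hj : 1 ≤ j)
    (𝓑 : (Fin N → ℕ) → Matrix (Fin m) (Fin l) ℝ)
    (W : Submodule ℝ (Fin l → ℝ))
    (hW : W = ⨅ ξ ∈ {ξ : Fin N → ℝ | ξ ≠ 0}, LinearMap.ker (symR j 𝓑 ξ).mulVecLin) :
    W = (⨅ β ∈ MIdx N j, LinearMap.ker (𝓑 β).mulVecLin) ∧
    ∃ C : (Fin N → ℕ) → Matrix (Fin l) (Fin m) ℝ,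
      (∀ w ∈ W, ∑ β ∈ MIdx N j, (C β).mulVec ((𝓑 β).mulVec w) = 0) ∧
      (∀ w : Fin l → ℝ, (∀ x ∈ W, ∑ i, w i * x i = 0) →
        ∑ β ∈ MIdx N j, (C β).mulVec ((𝓑 β).mulVec w) = w) := by
  classical
  have hmem : ∀ w : Fin l → ℝ, w ∈ W ↔ ∀ β ∈ MIdx N j, (𝓑 β).mulVec w = 0 := by
    intro w
    rw [hW]
    simp only [Submodule.mem_iInf, LinearMap.mem_ker, Matrix.mulVecLin_apply, Set.mem_setOf_eq]
    constructor
    · intro h β hβ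
      funext i
      refine aux_coeff j hj (fun γ => ((𝓑 γ).mulVec w) i) (fun ξ hξ => ?_) β hβ
      have h1 := h ξ hξ
      rw [aux_symR_mulVec] at h1
      have h2 := congrFun h1 i
      simpa [Finset.sum_apply] using h2
    · intro h ξ _
      rw [aux_symR_mulVec]
      exact Finset.sum_eq_zero fun β hβ => by rw [h β hβ, smul_zero]
  have hpart1 : W = ⨅ β ∈ MIdx N j, LinearMap.ker (𝓑 β).mulVecLin := by
    ext w
    rw [hmem]
    simp [Submodule.mem_iInf]
  refine ⟨hpart1, ?_⟩
  let e : EuclideanSpace ℝ (Fin l) ≃ₗ[ℝ] (Fin l → ℝ) := WithLp.linearEquiv 2 ℝ (Fin l → ℝ)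
  let W' : Submodule ℝ (EuclideanSpace ℝ (Fin l)) := W.comap e.toLinearMap
  let Korth := W'ᗮ
  let P : EuclideanSpace ℝ (Fin l) →ₗ[ℝ] EuclideanSpace ℝ (Fin l) :=
    Korth.subtype ∘ₗ (Submodule.orthogonalProjectionOnto Korth : _ →L[ℝ] Korth).toLinearMap
  let P' : (Fin l → ℝ) →ₗ[ℝ] (Fin l → ℝ) := e.toLinearMap ∘ₗ P ∘ₗ e.symm.toLinearMap
  have hPW : ∀ w ∈ W, P' w = 0 := by
    intro w hw
    have hmemW' : e.symm w ∈ W' := by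
      simp only [W', Submodule.mem_comap, LinearEquiv.coe_coe, e.apply_symm_apply]
      exact hw
    have hz : Submodule.orthogonalProjectionOnto Korth (e.symm w) = 0 :=
      Submodule.orthogonalProjectionOnto_apply_of_mem_orthogonal
        (W'.le_orthogonal_orthogonal hmemW')
    simp [P', P, hz]
  have hPperp : ∀ w : Fin l → ℝ, (∀ x ∈ W, ∑ i, w i * x i = 0) → P' w = w := by
    intro w hw
    have hKmem : e.symm w ∈ Korth := by
      rw [Submodule.mem_orthogonal]
      intro v hv
      have hvW : e v ∈ W := hv
      have h0 := hw (e v) hvW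
      rw [PiLp.inner_apply]
      simp only [RCLike.inner_apply, starRingEnd_apply, star_trivial, e,
        WithLp.linearEquiv_symm_apply]
      rw [← h0]
      refine Finset.sum_congr rfl fun i _ => ?_
      congr 1 <;> rfl
    have hz : (Submodule.orthogonalProjectionOnto Korth (e.symm w) : EuclideanSpace ℝ (Fin l)) = e.symm w :=
      Submodule.starProjection_eq_self_iff.2 hKmem
    simp [P', P, hz]
  let T : (Fin l → ℝ) →ₗ[ℝ] (MIdxT N j → (Fin m → ℝ)) :=
    LinearMap.pi fun β => (𝓑 β.1).mulVecLin
  have hker : LinearMap.ker T ≤ LinearMap.ker P' := by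
    intro w hw
    rw [LinearMap.mem_ker] at hw ⊢
    apply hPW
    rw [hmem]
    intro β hβ
    have := congrFun hw (⟨β, hβ⟩ : MIdxT N j)
    exact this
  obtain ⟨L, hL⟩ := aux_factor T P' hker
  let C : (Fin N → ℕ) → Matrix (Fin l) (Fin m) ℝ := fun β =>
    if h : β ∈ MIdx N j then
      LinearMap.toMatrix' (L ∘ₗ LinearMap.single ℝ (fun _ : MIdxT N j => (Fin m → ℝ)) ⟨β, h⟩)
    else 0
  have hCapp : ∀ x : MIdxT N j, ∀ v : Fin m → ℝ,
      (C x.1).mulVec v = L (Pi.single x v) := by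
    intro x v
    have hx : C x.1 = LinearMap.toMatrix'
        (L ∘ₗ LinearMap.single ℝ (fun _ : MIdxT N j => (Fin m → ℝ)) x) := by
      show dite _ _ _ = _
      rw [dif_pos x.2]
      rfl
    rw [hx, ← Matrix.toLin'_apply, Matrix.toLin'_toMatrix']
    rfl
  have hsum : ∀ w : Fin l → ℝ,
      ∑ β ∈ MIdx N j, (C β).mulVec ((𝓑 β).mulVec w) = P' w := by
    intro w
    rw [← Finset.sum_attach (MIdx N j) (fun β => (C β).mulVec ((𝓑 β).mulVec w))]
    have step1 : ∑ x ∈ (MIdx N j).attach, (C x.1).mulVec ((𝓑 x.1).mulVec w)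
        = ∑ x ∈ (MIdx N j).attach, L (Pi.single x ((𝓑 x.1).mulVec w)) :=
      Finset.sum_congr rfl fun x _ => hCapp x _
    rw [step1, ← map_sum]
    rw [← hL w]
    congr 1
    have : ∑ x ∈ (MIdx N j).attach, Pi.single (M := fun _ : MIdxT N j => Fin m → ℝ)
        x ((𝓑 x.1).mulVec w) = ∑ x : MIdxT N j, Pi.single x (T w x) := rfl
    rw [this, Finset.univ_sum_single]
  exact ⟨C, fun w hw => by rw [hsum, hPW w hw], fun w hw => by rw [hsum, hPperp w hw]⟩


end
end

section
/- Let N ≥ 2. Consider on ℝ^N the scalar operator 𝓐 = Δ² (order 4, from ℝ to ℝ, with symbol 𝓐[ξ] = (∑_{j=1}^N ξ_j²)²) and the operator A = D² ∘ Δ (order 4, from ℝ to the N×N matrices, with symbol A[ξ] = (∑_{j=1}^N ξ_j²) · ξξ^T). Then: (i) ker 𝓐[ξ] ⊆ ker A[ξ] (as subspaces of ℂ) for every ξ ∈ ℂ^N \ {0}; (ii) 𝓐 = Δ² does not satisfy the complex constant rank condition: dim_ℂ ker 𝓐[ξ] equals 0 when ∑_j ξ_j² ≠ 0 and equals 1 when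 ξ ≠ 0 with ∑_j ξ_j² = 0; (iii) the linear space { D²(Δu) : u : ℝ^N → ℝ a polynomial with Δ²u = 0 on ℝ^N } is infinite-dimensional (equivalently, the space { D²h : h a harmonic polynomial on ℝ^N } is infinite-dimensional). -/
open MeasureTheory Matrix
open scoped ENNReal

noncomputable section

/-- The Laplacian on polynomials. -/
def lapP {N : ℕ} (p : MvPolynomial (Fin N) ℝ) : MvPolynomial (Fin N) ℝ :=
  ∑ i, MvPolynomial.pderiv i (MvPolynomial.pderiv i p)


namespace Aux15

open MvPolynomial

/-- The pair (Re, Im) of `(X a + i X b)^n`. -/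
def hpair {N : ℕ} (a b : Fin N) : ℕ → MvPolynomial (Fin N) ℝ × MvPolynomial (Fin N) ℝ
  | 0 => (1, 0)
  | n+1 => (X a * (hpair a b n).1 - X b * (hpair a b n).2,
            X a * (hpair a b n).2 + X b * (hpair a b n).1)

def hP {N : ℕ} (a b : Fin N) (n : ℕ) : MvPolynomial (Fin N) ℝ := (hpair a b n).1
def hQ {N : ℕ} (a b : Fin N) (n : ℕ) : MvPolynomial (Fin N) ℝ := (hpair a b n).2

lemma hP_succ {N : ℕ} (a b : Fin N) (n : ℕ) :
    hP a b (n+1) = X a * hP a b n - X b * hQ a b n := rfl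
lemma hQ_succ {N : ℕ} (a b : Fin N) (n : ℕ) :
    hQ a b (n+1) = X a * hQ a b n + X b * hP a b n := rfl
lemma hP_zero {N : ℕ} (a b : Fin N) : hP a b 0 = 1 := rfl
lemma hQ_zero {N : ℕ} (a b : Fin N) : hQ a b 0 = 0 := rfl

lemma pd_hpair {N : ℕ} {a b : Fin N} (hab : a ≠ b) (n : ℕ) :
    pderiv a (hP a b (n+1)) = (n+1 : ℕ) • hP a b n ∧
    pderiv b (hP a b (n+1)) = -((n+1 : ℕ) • hQ a b n) ∧
    pderiv a (hQ a b (n+1)) = (n+1 : ℕ) • hQ a b n ∧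
    pderiv b (hQ a b (n+1)) = (n+1 : ℕ) • hP a b n := by
  induction n with
  | zero =>
    simp [hP_succ, hQ_succ, hP_zero, hQ_zero, pderiv_X_self,
      pderiv_X_of_ne hab, pderiv_X_of_ne hab.symm]
  | succ n ih =>
    obtain ⟨h1, h2, h3, h4⟩ := ih
    refine ⟨?_, ?_, ?_, ?_⟩
    · rw [hP_succ a b (n+1), map_sub, pderiv_mul, pderiv_mul, pderiv_X_self,
        pderiv_X_of_ne hab.symm, h1, h3]
      simp only [hP_succ a b n, hQ_succ a b n, one_mul, zero_mul, zero_add,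
        mul_smul_comm, mul_neg, smul_neg, ← Nat.cast_smul_eq_nsmul ℝ]
      push_cast; module
    · rw [hP_succ a b (n+1), map_sub, pderiv_mul, pderiv_mul, pderiv_X_self,
        pderiv_X_of_ne hab, h2, h4]
      simp only [hP_succ a b n, hQ_succ a b n, one_mul, zero_mul, zero_add,
        mul_smul_comm, mul_neg, smul_neg, ← Nat.cast_smul_eq_nsmul ℝ]
      push_cast; module
    · rw [hQ_succ a b (n+1), map_add, pderiv_mul, pderiv_mul, pderiv_X_self,
        pderiv_X_of_ne hab.symm, h3, h1]
      simp only [hP_succ a b n, hQ_succ a b n, one_mul, zero_mul, zero_add,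
        mul_smul_comm, mul_neg, smul_neg, ← Nat.cast_smul_eq_nsmul ℝ]
      push_cast; module
    · rw [hQ_succ a b (n+1), map_add, pderiv_mul, pderiv_mul, pderiv_X_self,
        pderiv_X_of_ne hab, h4, h2]
      simp only [hP_succ a b n, hQ_succ a b n, one_mul, zero_mul, zero_add,
        mul_smul_comm, mul_neg, smul_neg, ← Nat.cast_smul_eq_nsmul ℝ]
      push_cast; module

lemma pd_other {N : ℕ} {a b : Fin N} {c : Fin N} (hca : c ≠ a) (hcb : c ≠ b) (n : ℕ) :
    pderiv c (hP a b n) = 0 ∧ pderiv c (hQ a b n) = 0 := by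
  induction n with
  | zero => simp [hP_zero, hQ_zero]
  | succ n ih =>
    simp [hP_succ, hQ_succ, pderiv_mul, pderiv_X_of_ne hca.symm, pderiv_X_of_ne hcb.symm,
      ih.1, ih.2]

lemma lapP_eq {N : ℕ} {a b : Fin N} (hab : a ≠ b) (p : MvPolynomial (Fin N) ℝ)
    (h : ∀ c : Fin N, c ≠ a → c ≠ b → pderiv c p = 0) :
    lapP p = pderiv a (pderiv a p) + pderiv b (pderiv b p) := by
  unfold lapP
  rw [← Finset.add_sum_erase _ _ (Finset.mem_univ a),
    ← Finset.add_sum_erase _ _ (Finset.mem_erase.2 ⟨hab.symm, Finset.mem_univ b⟩),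
    Finset.sum_eq_zero, add_zero]
  intro c hc
  simp only [Finset.mem_erase] at hc
  rw [h c hc.2.1 hc.1, map_zero]

lemma lapP_hP {N : ℕ} {a b : Fin N} (hab : a ≠ b) (n : ℕ) : lapP (hP a b n) = 0 := by
  rw [lapP_eq hab _ (fun c hca hcb => (pd_other hca hcb n).1)]
  match n with
  | 0 => simp [hP_zero]
  | 1 =>
    simp [hP_succ, hQ_zero, hP_zero, pderiv_X_self, pderiv_X_of_ne hab,
      pderiv_X_of_ne hab.symm]
  | n+2 =>
    rw [(pd_hpair hab (n+1)).1, (pd_hpair hab (n+1)).2.1, map_nsmul, map_neg, map_nsmul,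
      (pd_hpair hab n).1, (pd_hpair hab n).2.2.2]
    simp

lemma lapP_nsmul {N : ℕ} (k : ℕ) (p : MvPolynomial (Fin N) ℝ) :
    lapP (k • p) = k • lapP p := by
  unfold lapP
  rw [Finset.smul_sum]
  exact Finset.sum_congr rfl fun i _ => by
    rw [show (k • p) = ((k : ℝ) • p) by rw [Nat.cast_smul_eq_nsmul],
      Derivation.map_smul, Derivation.map_smul, Nat.cast_smul_eq_nsmul]

lemma lapP_X_mul {N : ℕ} (a : Fin N) (p : MvPolynomial (Fin N) ℝ) :
    lapP (X a * p) = 2 • pderiv a p + X a * lapP p := by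
  unfold lapP
  have key : ∀ i : Fin N, pderiv i (pderiv i (X a * p))
      = 2 • (pderiv i (X a) * pderiv i p) + X a * pderiv i (pderiv i p) := by
    intro i
    rw [pderiv_mul, map_add, pderiv_mul, pderiv_mul]
    have h0 : pderiv i (pderiv i (X a : MvPolynomial (Fin N) ℝ)) = 0 := by
      rcases eq_or_ne i a with rfl | h
      · rw [pderiv_X_self]; simp
      · rw [pderiv_X_of_ne (Ne.symm h)]; simp
    rw [h0]
    ring
  rw [Finset.sum_congr rfl (fun i _ => key i), Finset.sum_add_distrib, ← Finset.mul_sum]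
  congr 1
  rw [← Finset.smul_sum]
  congr 1
  rw [Finset.sum_eq_single a]
  · rw [pderiv_X_self, one_mul]
  · intro c _ hc; rw [pderiv_X_of_ne hc.symm, zero_mul]
  · intro h; exact absurd (Finset.mem_univ a) h

lemma aeval_hpair {N : ℕ} {a b : Fin N} (hab : a ≠ b) (n : ℕ) :
    MvPolynomial.aeval (fun j => if j = a then (Polynomial.X : Polynomial ℝ) else 0)
        (hP a b n) = Polynomial.X ^ n ∧
    MvPolynomial.aeval (fun j => if j = a then (Polynomial.X : Polynomial ℝ) else 0)
        (hQ a b n) = 0 := by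
  induction n with
  | zero => simp [hP_zero, hQ_zero]
  | succ n ih =>
    rw [hP_succ, hQ_succ]
    simp only [map_add, map_sub, _root_.map_mul, MvPolynomial.aeval_X, ih.1, ih.2,
      if_pos rfl, if_neg hab.symm, if_true]
    constructor <;> ring

lemma lapP_Xa_hP {N : ℕ} {a b : Fin N} (hab : a ≠ b) (n : ℕ) :
    lapP (X a * hP a b (n+3)) = (2*(n+3)) • hP a b (n+2) := by
  rw [lapP_X_mul, lapP_hP hab, mul_zero, add_zero, (pd_hpair hab (n+2)).1, smul_smul]

lemma biharm {N : ℕ} {a b : Fin N} (hab : a ≠ b) (n : ℕ) :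
    lapP (lapP (X a * hP a b (n+3))) = 0 := by
  rw [lapP_Xa_hP hab, lapP_nsmul, lapP_hP hab, smul_zero]

lemma entry_eq {N : ℕ} {a b : Fin N} (hab : a ≠ b) (n : ℕ) :
    pderiv a (pderiv a (lapP (X a * hP a b (n+3))))
      = (2*(n+3)*(n+2)*(n+1)) • hP a b n := by
  rw [lapP_Xa_hP hab, map_nsmul, (pd_hpair hab (n+1)).1, map_nsmul, map_nsmul,
    (pd_hpair hab n).1, smul_smul, smul_smul]

end Aux15

theorem statement15 (N : ℕ) (hN : 2 ≤ N) :
    (∀ ξ : Fin N → ℂ, ξ ≠ 0 → ∀ w : ℂ, (∑ j, ξ j ^ 2) ^ 2 * w = 0 →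
        ∀ i i' : Fin N, (∑ j, ξ j ^ 2) * (ξ i * ξ i') * w = 0) ∧
    (∀ ξ : Fin N → ℂ, ξ ≠ 0 →
      (((∑ j, ξ j ^ 2) ≠ 0 → Module.finrank ℂ
          (LinearMap.ker ((∑ j, ξ j ^ 2) ^ 2 • (LinearMap.id : ℂ →ₗ[ℂ] ℂ))) = 0) ∧
        ((∑ j, ξ j ^ 2) = 0 → Module.finrank ℂ
          (LinearMap.ker ((∑ j, ξ j ^ 2) ^ 2 • (LinearMap.id : ℂ →ₗ[ℂ] ℂ))) = 1))) ∧
    ¬ FiniteDimensional ℝ (Submodule.span ℝ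
        { M : Matrix (Fin N) (Fin N) (MvPolynomial (Fin N) ℝ) |
          ∃ u : MvPolynomial (Fin N) ℝ, lapP (lapP u) = 0 ∧
            M = fun i i' => MvPolynomial.pderiv i (MvPolynomial.pderiv i' (lapP u)) }) := by
  refine ⟨?_, ?_, ?_⟩
  · intro ξ hξ w h i i'
    by_cases hs : (∑ j, ξ j ^ 2) = 0
    · rw [hs, zero_mul, zero_mul]
    · have hw : w = 0 := by
        rcases mul_eq_zero.1 h with h0 | h0
        · exact absurd h0 (pow_ne_zero 2 hs)
        · exact h0
      rw [hw, mul_zero]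
  · intro ξ hξ
    constructor
    · intro hs
      rw [LinearMap.ker_smul _ _ (pow_ne_zero 2 hs), LinearMap.ker_id]
      exact finrank_bot ℂ ℂ
    · intro hs
      have h0 : ((0:ℂ))^2 • (LinearMap.id : ℂ →ₗ[ℂ] ℂ) = 0 := by
        norm_num
      rw [hs, h0, LinearMap.ker_zero, finrank_top, Module.finrank_self]
  · intro hFD
    open Aux15 MvPolynomial in
    have ha : (0 : ℕ) < N := by omega
    have hb : (1 : ℕ) < N := by omega
    set a : Fin N := ⟨0, ha⟩ with ha'
    set b : Fin N := ⟨1, hb⟩ with hb'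
    have hab : a ≠ b := by simp [ha', hb', Fin.ext_iff]
    set Sp := Submodule.span ℝ
        { M : Matrix (Fin N) (Fin N) (MvPolynomial (Fin N) ℝ) |
          ∃ u : MvPolynomial (Fin N) ℝ, lapP (lapP u) = 0 ∧
            M = fun i i' => MvPolynomial.pderiv i (MvPolynomial.pderiv i' (lapP u)) }
      with hSp
    set c : ℕ → ℕ := fun n => 2*(n+3)*(n+2)*(n+1) with hc
    set Mn : ℕ → Matrix (Fin N) (Fin N) (MvPolynomial (Fin N) ℝ) :=
      fun n => fun i i' => pderiv i (pderiv i' (lapP (X a * hP a b (n+3)))) with hMn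
    have hmem : ∀ n, Mn n ∈ Sp := fun n =>
      Submodule.subset_span ⟨X a * hP a b (n+3), biharm hab n, rfl⟩
    set f : Fin N → Polynomial ℝ := fun j => if j = a then Polynomial.X else 0 with hf
    set Ψ : Matrix (Fin N) (Fin N) (MvPolynomial (Fin N) ℝ) →ₗ[ℝ] Polynomial ℝ :=
      { toFun := fun M => MvPolynomial.aeval f (M a a)
        map_add' := fun M1 M2 => by simp [Matrix.add_apply]
        map_smul' := fun r M => by simp [Matrix.smul_apply] } with hΨdef
    have hΨ : ∀ n, Ψ (Mn n) = (c n : ℝ) • Polynomial.X ^ n := by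
      intro n
      show MvPolynomial.aeval f (Mn n a a) = _
      rw [hMn]
      show MvPolynomial.aeval f (pderiv a (pderiv a (lapP (X a * hP a b (n+3))))) = _
      rw [entry_eq hab n, map_nsmul, (aeval_hpair hab n).1, ← Nat.cast_smul_eq_nsmul ℝ]
    have hXpow : LinearIndependent ℝ (fun n : ℕ => (Polynomial.X : Polynomial ℝ) ^ n) := by
      have h := (Polynomial.basisMonomials ℝ).linearIndependent
      rw [Polynomial.coe_basisMonomials] at h
      simpa [Polynomial.X_pow_eq_monomial] using h
    have hcne : ∀ n, ((c n : ℝ)) ≠ 0 := by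
      intro n
      have : c n ≠ 0 := by positivity
      exact_mod_cast this
    have hli2 : LinearIndependent ℝ
        (fun n : ℕ => (c n : ℝ) • (Polynomial.X : Polynomial ℝ) ^ n) := by
      have h := hXpow.units_smul (fun n => Units.mk0 ((c n : ℝ)) (hcne n))
      exact h
    have hliv : LinearIndependent ℝ (fun n : ℕ => (⟨Mn n, hmem n⟩ : Sp)) := by
      apply LinearIndependent.of_comp (Ψ.comp Sp.subtype)
      have heq : (⇑(Ψ.comp Sp.subtype) ∘ fun n : ℕ => (⟨Mn n, hmem n⟩ : Sp))
          = fun n : ℕ => (c n : ℝ) • (Polynomial.X : Polynomial ℝ) ^ n :=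
        funext fun n => by
          rw [Function.comp_apply, LinearMap.comp_apply, Submodule.subtype_apply]
          exact hΨ n
      rw [heq]
      exact hli2
    have hlt := hliv.lt_aleph0_of_finiteDimensional
    rw [Cardinal.mk_nat] at hlt
    exact lt_irrefl _ hlt


end
end
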